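/- arXiv:2210.06872 — 3 statements merged into one kernel-verified Lean document; each statement's English description precedes it below -/
import Mathlib

section
/- If β₁, β₂, … are i.i.d. Beta(1, α) random variables with α > 0 and π_k = β_k ∏_{t<k}(1 − β_t), then Σ_{k=1}^∞ π_k = 1 almost surely. -/
/-!
The partial sums telescope: `∑_{k<n} π_k = 1 - ∏_{t<n} (1 - β_t)`, so it suffices that the
remaining stick `∏_{t<n} (1 - β_t)` tends to `0` almost surely. It lies in `[0, 1]` and decreases
in `n`, and by independence its expectation is `(α / (α + 1))ⁿ → 0`; by monotone convergence its
limit then has expectation `0`, so the limit vanishes almost surely.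
-/

open MeasureTheory

/-- The Beta(1, α) distribution on ℝ, with density `α (1-x)^(α-1)` on `(0,1)`. -/
noncomputable def betaOne (α : ℝ) : Measure ℝ :=
  volume.withDensity fun x =>
    ENNReal.ofReal (if x ∈ Set.Ioo (0 : ℝ) 1 then α * (1 - x) ^ (α - 1) else 0)

open ProbabilityTheory Filter Topology Finset

theorem Finset.sum_range_mul_prod_one_sub {R : Type*} [CommRing R] (b : ℕ → R) (n : ℕ) :
    ∑ k ∈ range n, b k * ∏ t ∈ range k, (1 - b t) = 1 - ∏ t ∈ range n, (1 - b t) := by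
  induction n with
  | zero => simp
  | succ n ih => rw [sum_range_succ, ih, prod_range_succ]; ring

theorem antitone_prod_range_of_mem_Icc {R : Type*} [CommSemiring R] [PartialOrder R]
    [IsOrderedRing R] {b : ℕ → R} (hb : ∀ k, b k ∈ Set.Icc 0 1) :
    Antitone fun n => ∏ k ∈ range n, b k :=
  antitone_nat_of_succ_le fun n => by
    rw [prod_range_succ]
    exact mul_le_of_le_one_right (prod_nonneg fun k _ => (hb k).1) (hb n).2

theorem hasSum_stick_breaking {b : ℕ → ℝ} (hb : ∀ k, b k ∈ Set.Icc 0 1)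
    (hprod : Tendsto (fun n => ∏ t ∈ range n, (1 - b t)) atTop (𝓝 0)) :
    HasSum (fun k => b k * ∏ t ∈ range k, (1 - b t)) 1 := by
  have hnonneg k : 0 ≤ b k * ∏ t ∈ range k, (1 - b t) :=
    mul_nonneg (hb k).1 (prod_nonneg fun t _ => sub_nonneg.2 (hb t).2)
  rw [hasSum_iff_tendsto_nat_of_nonneg hnonneg]
  simp_rw [sum_range_mul_prod_one_sub]
  simpa using tendsto_const_nhds.sub hprod

theorem ProbabilityTheory.iIndepFun.integral_prod_range_eq_prod_integral {Ω : Type*}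
    [MeasurableSpace Ω] {P : Measure Ω} {g : ℕ → Ω → ℝ} (h : iIndepFun g P)
    (hmeas : ∀ k, AEStronglyMeasurable (g k) P) (n : ℕ) :
    ∫ ω, ∏ k ∈ range n, g k ω ∂P = ∏ k ∈ range n, ∫ ω, g k ω ∂P := by
  have := (h.precomp (Fin.val_injective (n := n))).integral_fun_prod_eq_prod_integral
    fun i => hmeas i
  simp_rw [prod_range]
  exact this

theorem ae_tendsto_prod_range_zero_of_iIndepFun {Ω : Type*} [MeasurableSpace Ω]
    {P : Measure Ω} {g : ℕ → Ω → ℝ} {c : ℝ} (hind : iIndepFun g P)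
    (hmeas : ∀ k, AEStronglyMeasurable (g k) P) (hbound : ∀ᵐ ω ∂P, ∀ k, g k ω ∈ Set.Icc 0 1)
    (hmean : ∀ k, ∫ ω, g k ω ∂P = c) (hc : c < 1) :
    ∀ᵐ ω ∂P, Tendsto (fun n => ∏ k ∈ range n, g k ω) atTop (𝓝 0) := by
  have := hind.isProbabilityMeasure
  have hprod_bound : ∀ᵐ ω ∂P, ∀ n, ∏ k ∈ range n, g k ω ∈ Set.Icc 0 1 := by
    filter_upwards [hbound] with ω h n
    exact ⟨prod_nonneg fun k _ => (h k).1, prod_le_one (fun k _ => (h k).1) fun k _ => (h k).2⟩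
  have hint n : Integrable (fun ω => ∏ k ∈ range n, g k ω) P := by
    refine .of_bound (Finset.aestronglyMeasurable_fun_prod _ fun k _ => hmeas k) 1 ?_
    filter_upwards [hprod_bound] with ω h
    exact abs_le.2 ⟨by linarith [(h n).1], (h n).2⟩
  have hc0 : 0 ≤ c := hmean 0 ▸ integral_nonneg_of_ae (hbound.mono fun ω h => (h 0).1)
  refine tendsto_of_integral_tendsto_of_antitone hint (integrable_zero _ _ P) ?_ ?_ ?_
  · simpa [hind.integral_prod_range_eq_prod_integral hmeas, hmean]
      using tendsto_pow_atTop_nhds_zero_of_lt_one hc0 hc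
  · filter_upwards [hbound] with ω h using antitone_prod_range_of_mem_Icc h
  · filter_upwards [hprod_bound] with ω h n using (h n).1

theorem integral_one_sub_rpow {a : ℝ} (ha : -1 < a) :
    ∫ x in (0 : ℝ)..1, (1 - x) ^ a = 1 / (a + 1) := by
  rw [intervalIntegral.integral_comp_sub_left (fun x => x ^ a), sub_self, sub_zero,
    integral_rpow (.inl ha), Real.one_rpow, Real.zero_rpow (by linarith), sub_zero]

theorem ae_mem_Ioo_betaOne (α : ℝ) : ∀ᵐ x ∂betaOne α, x ∈ Set.Ioo 0 1 := by
  change betaOne α (Set.Ioo 0 1)ᶜ = 0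
  rw [betaOne, withDensity_apply _ measurableSet_Ioo.compl]
  exact setLIntegral_eq_zero measurableSet_Ioo.compl fun x (hx : x ∉ Set.Ioo 0 1) => by
    simp [hx]

theorem integral_one_sub_betaOne {α : ℝ} (hα : 0 ≤ α) :
    ∫ x, 1 - x ∂betaOne α = α / (α + 1) := by
  have hdens x :
      (ENNReal.ofReal (if x ∈ Set.Ioo (0 : ℝ) 1 then α * (1 - x) ^ (α - 1) else 0)).toReal •
        (1 - x) = (Set.Ioo 0 1).indicator (fun x => α * (1 - x) ^ α) x := by
    by_cases hx : x ∈ Set.Ioo (0 : ℝ) 1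
    · have hx1 : 0 < 1 - x := sub_pos.2 hx.2
      rw [if_pos hx, Set.indicator_of_mem hx, ENNReal.toReal_ofReal (by positivity), smul_eq_mul,
        mul_assoc, ← Real.rpow_add_one hx1.ne', sub_add_cancel]
    · simp [hx]
  have hmeas : Measurable fun x : ℝ =>
      if x ∈ Set.Ioo (0 : ℝ) 1 then α * (1 - x) ^ (α - 1) else 0 :=
    Measurable.ite measurableSet_Ioo (by fun_prop) measurable_const
  rw [betaOne, integral_withDensity_eq_integral_toReal_smul hmeas.ennreal_ofReal
    (ae_of_all _ fun _ => ENNReal.ofReal_lt_top)]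
  simp_rw [hdens]
  rw [integral_indicator measurableSet_Ioo, ← integral_Ioc_eq_integral_Ioo,
    ← intervalIntegral.integral_of_le zero_le_one, intervalIntegral.integral_const_mul,
    integral_one_sub_rpow (by linarith)]
  ring

theorem stick_breaking_sum_one_general
    {Ω : Type*} [MeasurableSpace Ω] (P : Measure Ω)
    (α : ℝ) (hα : 0 < α) (β : ℕ → Ω → ℝ)
    (hmeas : ∀ k, Measurable (β k))
    (hindep : ProbabilityTheory.iIndepFun β P)
    (hdist : ∀ k, Measure.map (β k) P = betaOne α) :
    ∀ᵐ ω ∂P, ∑' k, β k ω * ∏ t ∈ Finset.range k, (1 - β t ω) = 1 := by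
  have hβ : ∀ᵐ ω ∂P, ∀ k, β k ω ∈ Set.Icc 0 1 := ae_all_iff.2 fun k =>
    (ae_of_ae_map (hmeas k).aemeasurable (hdist k ▸ ae_mem_Ioo_betaOne α)).mono
      fun _ h => Set.Ioo_subset_Icc_self h
  have hmean k : ∫ ω, 1 - β k ω ∂P = α / (α + 1) := by
    rw [← integral_one_sub_betaOne hα.le, ← hdist k,
      integral_map (hmeas k).aemeasurable (by fun_prop)]
  have hprod := ae_tendsto_prod_range_zero_of_iIndepFun
    (hindep.comp (fun _ x => 1 - x) fun _ => by fun_prop)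
    (fun k => ((hmeas k).const_sub 1).aestronglyMeasurable)
    (hβ.mono fun _ h k => ⟨sub_nonneg.2 (h k).2, sub_le_self _ (h k).1⟩) hmean
    ((div_lt_one (by linarith)).2 (by linarith))
  filter_upwards [hβ, hprod] with ω hω hq using (hasSum_stick_breaking hω hq).tsum_eq

/-- If `β₁, β₂, …` are i.i.d. Beta(1, α) random variables with `α > 0` and
`π_k = β_k ∏_{t<k}(1 − β_t)`, then `Σ_{k=1}^∞ π_k = 1` almost surely. -/
theorem stick_breaking_sum_one
    {Ω : Type*} [MeasurableSpace Ω] (P : Measure Ω) [IsProbabilityMeasure P]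
    (α : ℝ) (hα : 0 < α) (β : ℕ → Ω → ℝ)
    (hmeas : ∀ k, Measurable (β k))
    (hindep : ProbabilityTheory.iIndepFun β P)
    (hdist : ∀ k, Measure.map (β k) P = betaOne α) :
    ∀ᵐ ω ∂P, ∑' k, β k ω * ∏ t ∈ Finset.range k, (1 - β t ω) = 1 :=
  stick_breaking_sum_one_general P α hα β hmeas hindep hdist
end

section
/- The difference between the true ELBO L_HPP and the surrogate ELBO L̂_HPP equals E_{q(ρ)}[A(ρλ_{t−1} + (1−ρ)λ₀)] − (E_{q(ρ)}[ρ]A(λ_{t−1}) + (1−E_{q(ρ)}[ρ])A(λ₀)) (up to sign), which does not depend on the variational parameters λ_t, φ_t; hence maximizing the surrogate over (λ_t, φ_t) also maximizes the true ELBO over (λ_t, φ_t). -/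
open MeasureTheory

/-- The difference between the exact power-prior ELBO term and its surrogate equals
`(E_q[ρ]A(λ_prev) + (1−E_q[ρ])A(λ₀)) − E_{q(ρ)}[A(ρλ_prev + (1−ρ)λ₀)]`
(the claimed quantity up to sign), which does not depend on the variational distribution
`q(θ|λ_t)` (nor on `φ_t`); hence any maximizer of the surrogate ELBO (the surrogate term plus
any remainder `R` collecting all other ELBO terms) over a family of variational distributions
also maximizes the true ELBO. -/
theorem surrogate_elbo_difference_constant
    {Θ : Type*} [MeasurableSpace Θ] {d : ℕ}
    (h : Θ → ℝ) (T : Θ → Fin d → ℝ) (A : (Fin d → ℝ) → ℝ)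
    (p : (Fin d → ℝ) → Θ → ℝ)
    (hp : ∀ lam θ, p lam θ = h θ * Real.exp ((∑ i, lam i * T θ i) - A lam))
    (hh : ∀ θ, 0 < h θ)
    (lprev l₀ : Fin d → ℝ)
    (π : Measure ℝ) [IsProbabilityMeasure π] (hπ : π (Set.Icc (0 : ℝ) 1)ᶜ = 0)
    (hAint : Integrable (fun ρ => A (fun i => ρ * lprev i + (1 - ρ) * l₀ i)) π)
    (M : Set (Measure Θ))
    (hM : ∀ μ ∈ M, IsProbabilityMeasure μ
      ∧ Integrable (fun θ => Real.log (h θ)) μ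
      ∧ ∀ i, Integrable (fun θ => T θ i) μ) :
    (∀ μ ∈ M,
      (∫ ρ, ∫ θ, Real.log (p (fun i => ρ * lprev i + (1 - ρ) * l₀ i) θ) ∂μ ∂π)
        - ((∫ ρ, ρ ∂π) * ∫ θ, Real.log (p lprev θ) ∂μ
            + (1 - ∫ ρ, ρ ∂π) * ∫ θ, Real.log (p l₀ θ) ∂μ)
      = ((∫ ρ, ρ ∂π) * A lprev + (1 - ∫ ρ, ρ ∂π) * A l₀)
          - ∫ ρ, A (fun i => ρ * lprev i + (1 - ρ) * l₀ i) ∂π)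
    ∧ ∀ (R : Measure Θ → ℝ), ∀ μstar ∈ M,
        (∀ μ ∈ M,
          (∫ ρ, ρ ∂π) * (∫ θ, Real.log (p lprev θ) ∂μ)
              + (1 - ∫ ρ, ρ ∂π) * (∫ θ, Real.log (p l₀ θ) ∂μ) + R μ
            ≤ (∫ ρ, ρ ∂π) * (∫ θ, Real.log (p lprev θ) ∂μstar)
              + (1 - ∫ ρ, ρ ∂π) * (∫ θ, Real.log (p l₀ θ) ∂μstar) + R μstar) →
        ∀ μ ∈ M,
          (∫ ρ, ∫ θ, Real.log (p (fun i => ρ * lprev i + (1 - ρ) * l₀ i) θ) ∂μ ∂π) + R μ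
            ≤ (∫ ρ, ∫ θ, Real.log (p (fun i => ρ * lprev i + (1 - ρ) * l₀ i) θ) ∂μstar ∂π)
                + R μstar := by
  classical
  have hρint : Integrable (fun ρ : ℝ => ρ) π := by
    refine Integrable.mono' (integrable_const 1) measurable_id.aestronglyMeasurable ?_
    have hae : ∀ᵐ ρ ∂π, ρ ∈ Set.Icc (0 : ℝ) 1 := by
      rw [ae_iff]
      exact hπ
    filter_upwards [hae] with ρ hρ
    rw [Real.norm_eq_abs, abs_le]
    exact ⟨by linarith [hρ.1], hρ.2⟩
  have key : ∀ μ ∈ M, ∀ lam : Fin d → ℝ,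
      ∫ θ, Real.log (p lam θ) ∂μ
        = (∫ θ, Real.log (h θ) ∂μ) + (∑ i, lam i * ∫ θ, T θ i ∂μ) - A lam := by
    intro μ hμ lam
    obtain ⟨hprob, hlogh, hT⟩ := hM μ hμ
    haveI := hprob
    have hre : ∀ θ, Real.log (p lam θ)
        = Real.log (h θ) + ((∑ i, lam i * T θ i) - A lam) := by
      intro θ
      rw [hp, Real.log_mul (ne_of_gt (hh θ)) (Real.exp_ne_zero _), Real.log_exp]
    have hsumint : Integrable (fun θ => ∑ i, lam i * T θ i) μ :=
      integrable_finset_sum _ (fun i _ => (hT i).const_mul _)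
    calc ∫ θ, Real.log (p lam θ) ∂μ
        = ∫ θ, (Real.log (h θ) + ((∑ i, lam i * T θ i) - A lam)) ∂μ := by
          simp_rw [hre]
      _ = (∫ θ, Real.log (h θ) ∂μ) + ((∫ θ, ∑ i, lam i * T θ i ∂μ) - A lam) := by
          have hsub : Integrable (fun θ => (∑ i, lam i * T θ i) - A lam) μ :=
            hsumint.sub (integrable_const _)
          rw [integral_add hlogh hsub, integral_sub hsumint (integrable_const _),
            integral_const]
          simp
      _ = _ := by
          rw [integral_finset_sum _ (fun i _ => (hT i).const_mul _)]
          simp_rw [integral_const_mul]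
          ring
  have claim1 : ∀ μ ∈ M,
      (∫ ρ, ∫ θ, Real.log (p (fun i => ρ * lprev i + (1 - ρ) * l₀ i) θ) ∂μ ∂π)
        - ((∫ ρ, ρ ∂π) * ∫ θ, Real.log (p lprev θ) ∂μ
            + (1 - ∫ ρ, ρ ∂π) * ∫ θ, Real.log (p l₀ θ) ∂μ)
      = ((∫ ρ, ρ ∂π) * A lprev + (1 - ∫ ρ, ρ ∂π) * A l₀)
          - ∫ ρ, A (fun i => ρ * lprev i + (1 - ρ) * l₀ i) ∂π := by
    intro μ hμ
    set L := ∫ θ, Real.log (h θ) ∂μ with hL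
    set Sa := ∑ i, lprev i * ∫ θ, T θ i ∂μ with hSa
    set Sb := ∑ i, l₀ i * ∫ θ, T θ i ∂μ with hSb
    have hinner : ∀ ρ : ℝ,
        ∫ θ, Real.log (p (fun i => ρ * lprev i + (1 - ρ) * l₀ i) θ) ∂μ
          = L + (ρ * Sa + (1 - ρ) * Sb)
              - A (fun i => ρ * lprev i + (1 - ρ) * l₀ i) := by
      intro ρ
      rw [key μ hμ]
      congr 2
      rw [hSa, hSb, Finset.mul_sum, Finset.mul_sum, ← Finset.sum_add_distrib]
      exact Finset.sum_congr rfl fun i _ => by ring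
    have h1 : Integrable (fun ρ : ℝ => ρ * Sa) π := hρint.mul_const _
    have h2 : Integrable (fun ρ : ℝ => (1 - ρ) * Sb) π :=
      (((integrable_const (1 : ℝ)).sub hρint).mul_const _)
    have houter :
        (∫ ρ, ∫ θ, Real.log (p (fun i => ρ * lprev i + (1 - ρ) * l₀ i) θ) ∂μ ∂π)
          = L + ((∫ ρ, ρ ∂π) * Sa + (1 - ∫ ρ, ρ ∂π) * Sb)
              - ∫ ρ, A (fun i => ρ * lprev i + (1 - ρ) * l₀ i) ∂π := by
      simp_rw [hinner]
      have h12 : Integrable (fun ρ : ℝ => ρ * Sa + (1 - ρ) * Sb) π := h1.add h2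
      have hIa : Integrable (fun ρ : ℝ => L + (ρ * Sa + (1 - ρ) * Sb)) π :=
        (integrable_const L).add h12
      rw [integral_sub hIa hAint, integral_add (integrable_const L) h12,
        integral_add h1 h2, integral_const]
      have : (∫ ρ, (1 - ρ) * Sb ∂π) = (1 - ∫ ρ, ρ ∂π) * Sb := by
        rw [integral_mul_const, integral_sub (integrable_const 1) hρint, integral_const]
        simp
      rw [this, integral_mul_const]
      simp
    rw [houter, key μ hμ lprev, key μ hμ l₀, ← hL, ← hSa, ← hSb]
    ring
  refine ⟨claim1, ?_⟩
  intro R μstar hμstar hle μ hμ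
  have e1 := claim1 μ hμ
  have e2 := claim1 μstar hμstar
  have e3 := hle μ hμ
  linarith
end

section
/- For the Dirichlet process predictive rule, the sequence θ₁, θ₂, … generated by θ_{n+1} | θ₁,…,θ_n ~ (α G₀ + Σ_{i≤n} δ_{θ_i})/(α + n) is exchangeable; in particular, for any n and any permutation σ of {1,…,n}, the joint law of (θ_{σ(1)},…,θ_{σ(n)}) equals that of (θ₁,…,θ_n). -/
open MeasureTheory ProbabilityTheory

section Aux
variable {Θ : Type*} [MeasurableSpace Θ]

/-- The urn base measure `α G₀ + ∑ δ_{v i}`. -/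
noncomputable def urnM (G₀ : Measure Θ) (α : ℝ) {n : ℕ} (v : Fin n → Θ) : Measure Θ :=
  ENNReal.ofReal α • G₀ + ∑ i, Measure.dirac (v i)

lemma urnM_apply (G₀ : Measure Θ) (α : ℝ) {n : ℕ} (v : Fin n → Θ) {s : Set Θ}
    (hs : MeasurableSet s) :
    urnM G₀ α v s = ENNReal.ofReal α * G₀ s + ∑ i, s.indicator 1 (v i) := by
  simp only [urnM, Measure.add_apply, Measure.smul_apply, smul_eq_mul,
    Measure.finset_sum_apply]
  congr 1
  exact Finset.sum_congr rfl fun i _ => Measure.dirac_apply' _ hs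

lemma urnM_isFinite (G₀ : Measure Θ) [IsFiniteMeasure G₀] (α : ℝ) {n : ℕ} (v : Fin n → Θ) :
    IsFiniteMeasure (urnM G₀ α v) := by
  constructor
  rw [urnM_apply G₀ α v MeasurableSet.univ]
  refine ENNReal.add_lt_top.2 ⟨ENNReal.mul_lt_top ENNReal.ofReal_lt_top (measure_lt_top _ _), ?_⟩
  refine ENNReal.sum_lt_top.2 fun i _ => ?_
  simp [Set.indicator_apply]

lemma urnM_snoc (G₀ : Measure Θ) (α : ℝ) {n : ℕ} (v : Fin n → Θ) (x : Θ) :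
    urnM G₀ α (Fin.snoc v x) = urnM G₀ α v + Measure.dirac x := by
  simp only [urnM, Fin.sum_univ_castSucc, Fin.snoc_castSucc, Fin.snoc_last, add_assoc]

lemma urnM_comp_perm (G₀ : Measure Θ) (α : ℝ) {n : ℕ} (v : Fin n → Θ) (σ : Equiv.Perm (Fin n)) :
    urnM G₀ α (v ∘ σ) = urnM G₀ α v := by
  simp only [urnM]
  congr 1
  exact Equiv.sum_comp σ fun i => Measure.dirac (v i)

/-- The Pólya-urn predictive kernel. -/
noncomputable def urnK (G₀ : Measure Θ) (α : ℝ) (n : ℕ) : Kernel (Fin n → Θ) Θ where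
  toFun v := (ENNReal.ofReal (α + n))⁻¹ • urnM G₀ α v
  measurable' := by
    refine Measure.measurable_of_measurable_coe _ fun s hs => ?_
    simp only [Measure.smul_apply, smul_eq_mul]
    refine Measurable.const_mul ?_ _
    have : (fun v : Fin n → Θ => urnM G₀ α v s)
        = fun v => ENNReal.ofReal α * G₀ s + ∑ i, s.indicator 1 (v i) := by
      funext v; exact urnM_apply G₀ α v hs
    rw [this]
    refine Measurable.const_add ?_ _
    exact Finset.measurable_sum _ fun i _ =>
      ((measurable_one.indicator hs).comp (measurable_pi_apply i))

lemma urnK_apply (G₀ : Measure Θ) (α : ℝ) {n : ℕ} (v : Fin n → Θ) :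
    urnK G₀ α n v = (ENNReal.ofReal (α + n))⁻¹ • urnM G₀ α v := rfl

lemma urnK_isMarkov (G₀ : Measure Θ) [IsProbabilityMeasure G₀] {α : ℝ} (hα : 0 < α) (n : ℕ) :
    IsMarkovKernel (urnK G₀ α n) := by
  constructor
  intro v
  constructor
  rw [urnK_apply, Measure.smul_apply, smul_eq_mul, urnM_apply G₀ α v MeasurableSet.univ]
  have h1 : (ENNReal.ofReal α * G₀ Set.univ + ∑ i : Fin n, Set.univ.indicator 1 (v i))
      = ENNReal.ofReal (α + n) := by
    rw [ENNReal.ofReal_add hα.le (by positivity)]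
    simp [ENNReal.ofReal_natCast]
  rw [h1, ENNReal.inv_mul_cancel]
  · exact (ENNReal.ofReal_pos.2 (by positivity)).ne'
  · exact ENNReal.ofReal_ne_top

lemma urnK_comp_perm (G₀ : Measure Θ) (α : ℝ) {n : ℕ} (v : Fin n → Θ) (σ : Equiv.Perm (Fin n)) :
    urnK G₀ α n (v ∘ σ) = urnK G₀ α n v := by
  rw [urnK_apply, urnK_apply, urnM_comp_perm]

end Aux

section CompProdAux

variable {α α' β γ : Type*} [MeasurableSpace α] [MeasurableSpace α'] [MeasurableSpace β]
  [MeasurableSpace γ]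

lemma aux_map_prodMap_fst (μ : Measure α) [SFinite μ] (κ : Kernel α β) [IsSFiniteKernel κ]
    (η : Kernel α' β) [IsSFiniteKernel η] {g : α → α'} (hg : Measurable g)
    (hκ : ∀ a, κ a = η (g a)) :
    (μ ⊗ₘ κ).map (Prod.map g id) = (μ.map g) ⊗ₘ η := by
  ext s hs
  rw [Measure.map_apply (hg.prodMap measurable_id) hs,
    Measure.compProd_apply ((hg.prodMap measurable_id) hs),
    Measure.compProd_apply hs,
    lintegral_map (Kernel.measurable_kernel_prodMk_left hs) hg]
  refine lintegral_congr fun a => ?_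
  rw [hκ a]
  congr 1

lemma aux_map_prodMap_snd (μ : Measure α) [SFinite μ] (κ : Kernel α β) [IsSFiniteKernel κ]
    {g : β → γ} (hg : Measurable g) :
    (μ ⊗ₘ κ).map (Prod.map id g) = μ ⊗ₘ (κ.map g) := by
  ext s hs
  rw [Measure.map_apply (measurable_id.prodMap hg) hs,
    Measure.compProd_apply ((measurable_id.prodMap hg) hs),
    Measure.compProd_apply hs]
  refine lintegral_congr fun a => ?_
  rw [Kernel.map_apply' _ hg _ (measurable_prodMk_left hs)]
  congr 1

lemma aux_compProd_compProd (μ : Measure α) [SFinite μ] (κ : Kernel α β) [IsSFiniteKernel κ]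
    (η : Kernel (α × β) γ) [IsSFiniteKernel η] :
    (μ ⊗ₘ κ) ⊗ₘ η
      = (μ ⊗ₘ (κ ⊗ₖ η)).map (fun p : α × (β × γ) => ((p.1, p.2.1), p.2.2)) := by
  have hm : Measurable (fun p : α × (β × γ) => ((p.1, p.2.1), p.2.2)) :=
    (measurable_fst.prodMk (measurable_fst.comp measurable_snd)).prodMk
      (measurable_snd.comp measurable_snd)
  ext s hs
  rw [Measure.map_apply hm hs, Measure.compProd_apply (hm hs),
    Measure.compProd_apply hs,
    Measure.lintegral_compProd (Kernel.measurable_kernel_prodMk_left hs)]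
  refine lintegral_congr fun a => ?_
  rw [Kernel.compProd_apply (measurable_prodMk_left (hm hs))]
  rfl

end CompProdAux

section SnocAux

variable {Θ : Type*} [MeasurableSpace Θ]

lemma measurable_snocF {m : ℕ} :
    Measurable (fun p : (Fin m → Θ) × Θ => (Fin.snoc p.1 p.2 : Fin (m + 1) → Θ)) := by
  refine measurable_pi_lambda _ fun i => ?_
  refine Fin.lastCases ?_ (fun j => ?_) i
  · simpa only [Fin.snoc_last] using measurable_snd
  · simp only [Fin.snoc_castSucc]
    exact (measurable_pi_apply j).comp measurable_fst

lemma aux_symm_swap (m : Measure Θ) [IsFiniteMeasure m] :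
    (m.prod m + m.map (fun x => (x, x))).map Prod.swap
      = m.prod m + m.map (fun x => (x, x)) := by
  have hd : Measurable (fun x : Θ => (x, x)) := measurable_id.prodMk measurable_id
  rw [Measure.map_add _ _ measurable_swap, Measure.prod_swap,
    Measure.map_map measurable_swap hd]
  rfl

end SnocAux


section UrnJ

variable {Θ : Type*} [MeasurableSpace Θ]

lemma urnJ_apply (G₀ : Measure Θ) [IsProbabilityMeasure G₀] {α : ℝ} (hα : 0 < α) (m : ℕ)
    (v : Fin m → Θ) :
    ((urnK G₀ α m) ⊗ₖ ((urnK G₀ α (m + 1)).comap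
        (fun p : (Fin m → Θ) × Θ => (Fin.snoc p.1 p.2 : Fin (m + 1) → Θ)) measurable_snocF)) v
      = ((ENNReal.ofReal (α + m))⁻¹ * (ENNReal.ofReal (α + (m + 1 : ℕ)))⁻¹) •
          ((urnM G₀ α v).prod (urnM G₀ α v) + (urnM G₀ α v).map (fun x => (x, x))) := by
  haveI := urnK_isMarkov G₀ hα m
  haveI := urnK_isMarkov G₀ hα (m + 1)
  haveI := urnM_isFinite G₀ α v
  set M := urnM G₀ α v with hM
  have hd : Measurable (fun x : Θ => (x, x)) := measurable_id.prodMk measurable_id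
  ext s hs
  rw [Kernel.compProd_apply hs]
  have hint : ∀ b : Θ,
      ((urnK G₀ α (m + 1)).comap
        (fun p : (Fin m → Θ) × Θ => (Fin.snoc p.1 p.2 : Fin (m + 1) → Θ)) measurable_snocF)
        (v, b) (Prod.mk b ⁻¹' s)
      = (ENNReal.ofReal (α + (m + 1 : ℕ)))⁻¹ *
          (M (Prod.mk b ⁻¹' s) + Measure.dirac b (Prod.mk b ⁻¹' s)) := by
    intro b
    rw [Kernel.comap_apply, urnK_apply, urnM_snoc, Measure.smul_apply, smul_eq_mul,
      Measure.add_apply]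
  rw [lintegral_congr hint, urnK_apply, lintegral_smul_measure,
    lintegral_const_mul' _ _
      (ENNReal.inv_ne_top.2 (ENNReal.ofReal_pos.2 (by positivity)).ne')]
  have h1 : ∫⁻ b, M (Prod.mk b ⁻¹' s) ∂M = (M.prod M) s := (Measure.prod_apply hs).symm
  have h2 : ∫⁻ b, Measure.dirac b (Prod.mk b ⁻¹' s) ∂M = (M.map fun x => (x, x)) s := by
    have : ∀ b : Θ, Measure.dirac b (Prod.mk b ⁻¹' s)
        = ((fun x : Θ => (x, x)) ⁻¹' s).indicator 1 b := by
      intro b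
      rw [Measure.dirac_apply' _ (measurable_prodMk_left hs)]
      by_cases hb : (b, b) ∈ s <;>
        simp [Set.indicator_apply, Set.mem_preimage, hb]
    rw [lintegral_congr this, lintegral_indicator (hd hs)]
    simp only [Pi.one_apply, setLIntegral_one, Measure.map_apply hd hs]
  rw [lintegral_add_left (measurable_measure_prodMk_left hs), h1, h2]
  rw [Measure.smul_apply, Measure.add_apply, smul_eq_mul]
  exact (mul_assoc _ _ _).symm

lemma urnJ_swap (G₀ : Measure Θ) [IsProbabilityMeasure G₀] {α : ℝ} (hα : 0 < α) (m : ℕ) :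
    ((urnK G₀ α m) ⊗ₖ ((urnK G₀ α (m + 1)).comap
        (fun p : (Fin m → Θ) × Θ => (Fin.snoc p.1 p.2 : Fin (m + 1) → Θ))
        measurable_snocF)).map Prod.swap
      = (urnK G₀ α m) ⊗ₖ ((urnK G₀ α (m + 1)).comap
        (fun p : (Fin m → Θ) × Θ => (Fin.snoc p.1 p.2 : Fin (m + 1) → Θ)) measurable_snocF) := by
  haveI := urnK_isMarkov G₀ hα m
  haveI := urnK_isMarkov G₀ hα (m + 1)
  ext v : 1
  rw [Kernel.map_apply _ measurable_swap, urnJ_apply G₀ hα m v]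
  haveI := urnM_isFinite G₀ α v
  rw [Measure.map_smul, aux_symm_swap]

end UrnJ
section Main

variable {Θ : Type*} [MeasurableSpace Θ]

lemma measurable_pc {k : ℕ} (σ : Equiv.Perm (Fin k)) :
    Measurable (fun v : Fin k → Θ => v ∘ σ) :=
  measurable_pi_lambda _ fun i => measurable_pi_apply (σ i)

theorem urn_exchangeable_abstract (G₀ : Measure Θ) [IsProbabilityMeasure G₀] {α : ℝ}
    (hα : 0 < α) (ν : (k : ℕ) → Measure (Fin k → Θ))
    (hprob : ∀ k, IsProbabilityMeasure (ν k))
    (hstep : ∀ k, ν (k + 1)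
      = ((ν k) ⊗ₘ urnK G₀ α k).map
          (fun p : (Fin k → Θ) × Θ => (Fin.snoc p.1 p.2 : Fin (k + 1) → Θ))) :
    ∀ (k : ℕ) (σ : Equiv.Perm (Fin k)), (ν k).map (fun v => v ∘ σ) = ν k := by
  intro k
  induction k with
  | zero =>
    intro σ
    have h : (fun v : Fin 0 → Θ => v ∘ σ) = id := by
      funext v; funext i; exact i.elim0
    rw [h, Measure.map_id]
  | succ n ih =>
    haveI := hprob n
    haveI := hprob (n + 1)
    haveI := urnK_isMarkov G₀ hα n
    -- multiplicativity
    have hmul : ∀ g f : Equiv.Perm (Fin (n + 1)),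
        (ν (n + 1)).map (fun v => v ∘ g) = ν (n + 1) →
        (ν (n + 1)).map (fun v => v ∘ f) = ν (n + 1) →
        (ν (n + 1)).map (fun v => v ∘ (g * f)) = ν (n + 1) := by
      intro g f hg hf
      have h : (fun v : Fin (n + 1) → Θ => v ∘ (g * f))
          = (fun v : Fin (n + 1) → Θ => v ∘ f) ∘ (fun v => v ∘ g) := by
        funext v; funext i; simp [Equiv.Perm.mul_apply]
      rw [h, ← Measure.map_map (measurable_pc f) (measurable_pc g), hg, hf]
    -- invariance under permutations fixing the last coordinate
    have hfix : ∀ σ : Equiv.Perm (Fin (n + 1)), σ (Fin.last n) = Fin.last n →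
        (ν (n + 1)).map (fun v => v ∘ σ) = ν (n + 1) := by
      intro σ hlast
      have h1 : ∀ i : Fin n, σ i.castSucc ≠ Fin.last n := by
        intro i h
        exact (Fin.castSucc_lt_last i).ne (σ.injective (h.trans hlast.symm))
      have h2 : ∀ i : Fin n, σ⁻¹ i.castSucc ≠ Fin.last n := by
        intro i h
        have h' : i.castSucc = σ (Fin.last n) := by
          rw [← h, Equiv.Perm.coe_inv, Equiv.apply_symm_apply]
        rw [hlast] at h'
        exact (Fin.castSucc_lt_last i).ne h'
      let σ' : Equiv.Perm (Fin n) :=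
        { toFun := fun i => (σ i.castSucc).castPred (h1 i)
          invFun := fun i => (σ⁻¹ i.castSucc).castPred (h2 i)
          left_inv := by
            intro i
            simp only [Fin.castSucc_castPred, Equiv.Perm.coe_inv, Equiv.symm_apply_apply, Fin.castPred_castSucc]
          right_inv := by
            intro i
            simp only [Fin.castSucc_castPred, Equiv.Perm.coe_inv, Equiv.apply_symm_apply, Fin.castPred_castSucc] }
      have hcomp : ∀ i : Fin n, σ i.castSucc = (σ' i).castSucc := by
        intro i
        exact (Fin.castSucc_castPred (σ i.castSucc) (h1 i)).symm
      have hkey : (fun v : Fin (n + 1) → Θ => v ∘ σ)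
            ∘ (fun p : (Fin n → Θ) × Θ => (Fin.snoc p.1 p.2 : Fin (n + 1) → Θ))
          = (fun p : (Fin n → Θ) × Θ => (Fin.snoc p.1 p.2 : Fin (n + 1) → Θ))
            ∘ (Prod.map (fun v : Fin n → Θ => v ∘ σ') id) := by
        funext p; funext i
        refine Fin.lastCases ?_ (fun j => ?_) i
        · simp [Function.comp, hlast]
        · simp [Function.comp, hcomp j, Fin.snoc_castSucc]
      rw [hstep n, Measure.map_map (measurable_pc σ) measurable_snocF, hkey,
        ← Measure.map_map measurable_snocF ((measurable_pc σ').prodMap measurable_id),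
        aux_map_prodMap_fst _ _ _ (measurable_pc σ')
          (fun a => (urnK_comp_perm G₀ α a σ').symm),
        ih σ']
    -- now split on n
    cases n with
    | zero =>
      intro σ
      have h : (fun v : Fin 1 → Θ => v ∘ σ) = id := by
        funext v; funext i
        have h1 : σ i = i := by
          have := Fin.eq_zero (σ i)
          have := Fin.eq_zero i
          omega
        simp [h1]
      rw [h, Measure.map_id]
    | succ m =>
      haveI := hprob m
      haveI := urnK_isMarkov G₀ hα m
      haveI := urnK_isMarkov G₀ hα (m + 1)
      have hassoc : Measurable
          (fun p : (Fin m → Θ) × (Θ × Θ) => ((p.1, p.2.1), p.2.2)) :=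
        (measurable_fst.prodMk (measurable_fst.comp measurable_snd)).prodMk
          (measurable_snd.comp measurable_snd)
      have hTmeas : Measurable (fun p : (Fin m → Θ) × (Θ × Θ) =>
          (Fin.snoc (Fin.snoc p.1 p.2.1) p.2.2 : Fin (m + 2) → Θ)) := by
        exact measurable_snocF.comp
          ((measurable_snocF.comp
            (measurable_fst.prodMk (measurable_fst.comp measurable_snd))).prodMk
            (measurable_snd.comp measurable_snd))
      have hrep : ν (m + 2) = ((ν m) ⊗ₘ ((urnK G₀ α m) ⊗ₖ ((urnK G₀ α (m + 1)).comap
            (fun p : (Fin m → Θ) × Θ => (Fin.snoc p.1 p.2 : Fin (m + 1) → Θ))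
            measurable_snocF))).map
          (fun p : (Fin m → Θ) × (Θ × Θ) =>
            (Fin.snoc (Fin.snoc p.1 p.2.1) p.2.2 : Fin (m + 2) → Θ)) := by
        rw [hstep (m + 1), hstep m,
          ← aux_map_prodMap_fst (ν m ⊗ₘ urnK G₀ α m)
            ((urnK G₀ α (m + 1)).comap _ measurable_snocF) (urnK G₀ α (m + 1))
            measurable_snocF (fun a => ProbabilityTheory.Kernel.comap_apply _ _ _),
          aux_compProd_compProd,
          Measure.map_map (measurable_snocF.prodMap measurable_id) hassoc,
          Measure.map_map measurable_snocF
            ((measurable_snocF.prodMap measurable_id).comp hassoc)]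
        rfl
      -- swap of the last two coordinates
      have hswaplast :
          (ν (m + 2)).map
              (fun v => v ∘ (Equiv.swap ((Fin.last m).castSucc) (Fin.last (m + 1))))
            = ν (m + 2) := by
        have hkey : (fun v : Fin (m + 2) → Θ =>
              v ∘ (Equiv.swap ((Fin.last m).castSucc) (Fin.last (m + 1))))
            ∘ (fun p : (Fin m → Θ) × (Θ × Θ) =>
              (Fin.snoc (Fin.snoc p.1 p.2.1) p.2.2 : Fin (m + 2) → Θ))
            = (fun p : (Fin m → Θ) × (Θ × Θ) =>
              (Fin.snoc (Fin.snoc p.1 p.2.1) p.2.2 : Fin (m + 2) → Θ))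
            ∘ (Prod.map id (Prod.swap : Θ × Θ → Θ × Θ)) := by
          funext p; funext i
          refine Fin.lastCases ?_ (fun j => ?_) i
          · simp only [Function.comp_apply, Equiv.swap_apply_right]
            simp [Fin.snoc_castSucc, Fin.snoc_last, Prod.map]
          · refine Fin.lastCases ?_ (fun k' => ?_) j
            · simp only [Function.comp_apply, Equiv.swap_apply_left]
              simp [Fin.snoc_castSucc, Fin.snoc_last, Prod.map]
            · have hne1 : (k'.castSucc).castSucc ≠ (Fin.last m).castSucc := by
                intro h
                exact (Fin.castSucc_lt_last k').ne (Fin.castSucc_injective _ h)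
              have hne2 : (k'.castSucc).castSucc ≠ Fin.last (m + 1) :=
                (Fin.castSucc_lt_last _).ne
              simp only [Function.comp_apply,
                Equiv.swap_apply_of_ne_of_ne hne1 hne2]
              simp [Fin.snoc_castSucc, Prod.map]
        rw [hrep, Measure.map_map (measurable_pc _) hTmeas, hkey,
          ← Measure.map_map hTmeas (measurable_id.prodMap measurable_swap),
          aux_map_prodMap_snd _ _ measurable_swap, urnJ_swap G₀ hα m]
      -- invariance under a swap with the last coordinate
      have hswaplast' : ∀ x : Fin (m + 2), x ≠ Fin.last (m + 1) →
          (ν (m + 2)).map (fun v => v ∘ (Equiv.swap x (Fin.last (m + 1)))) = ν (m + 2) := by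
        intro x hx
        by_cases hxp : x = (Fin.last m).castSucc
        · rw [hxp]; exact hswaplast
        · have hplast : (Fin.last m).castSucc ≠ Fin.last (m + 1) :=
            (Fin.castSucc_lt_last _).ne
          have hτfix : Equiv.swap x ((Fin.last m).castSucc) (Fin.last (m + 1))
              = Fin.last (m + 1) :=
            Equiv.swap_apply_of_ne_of_ne (Ne.symm hx) (Ne.symm hplast)
          have hdecomp : Equiv.swap x (Fin.last (m + 1))
              = Equiv.swap x ((Fin.last m).castSucc)
                * Equiv.swap ((Fin.last m).castSucc) (Fin.last (m + 1))
                * Equiv.swap x ((Fin.last m).castSucc) := by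
            have h := Equiv.swap_apply_apply (Equiv.swap x ((Fin.last m).castSucc))
              ((Fin.last m).castSucc) (Fin.last (m + 1))
            rw [hτfix, Equiv.swap_apply_right, Equiv.swap_inv] at h
            exact h
          rw [hdecomp]
          exact hmul _ _
            (hmul _ _ (hfix _ hτfix) hswaplast) (hfix _ hτfix)
      have hswap : ∀ x y : Fin (m + 2), x ≠ y →
          (ν (m + 2)).map (fun v => v ∘ (Equiv.swap x y)) = ν (m + 2) := by
        intro x y hxy
        by_cases hx : x = Fin.last (m + 1)
        · by_cases hy : y = Fin.last (m + 1)
          · exact absurd (hx.trans hy.symm) hxy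
          · rw [hx, Equiv.swap_comm]
            exact hswaplast' y hy
        · by_cases hy : y = Fin.last (m + 1)
          · rw [hy]; exact hswaplast' x hx
          · refine hfix _ ?_
            exact Equiv.swap_apply_of_ne_of_ne (Ne.symm hx) (Ne.symm hy)
      -- conclude by swap induction
      intro σ
      refine Equiv.Perm.swap_induction_on σ ?_ ?_
      · have h : (fun v : Fin (m + 2) → Θ => v ∘ (1 : Equiv.Perm (Fin (m + 2)))) = id := by
          funext v; rfl
        rw [h, Measure.map_id]
      · intro f x y hxy hf
        exact hmul _ _ (hswap x y hxy) hf
end Main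

open MeasureTheory

/-- The sequence `θ₀, θ₁, …` generated by the Blackwell–MacQueen Pólya urn scheme for a
Dirichlet process (`θ₀ ~ G₀`, and `θ_{n+1} | θ₀,…,θ_n ~ (αG₀ + Σ_{i≤n} δ_{θ_i})/(α + n + 1)`)
is exchangeable: for any `n` and any permutation `σ` of the first `n` indices, the joint law
of `(θ_{σ(0)},…,θ_{σ(n−1)})` equals that of `(θ₀,…,θ_{n−1})`. -/
theorem polya_urn_exchangeable
    {Ω : Type*} [MeasurableSpace Ω] (P : Measure Ω) [IsProbabilityMeasure P]
    {Θ : Type*} [MeasurableSpace Θ] [StandardBorelSpace Θ] [Nonempty Θ]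
    (G₀ : Measure Θ) [IsProbabilityMeasure G₀] (α : ℝ) (hα : 0 < α)
    (θ : ℕ → Ω → Θ) (hmeas : ∀ i, Measurable (θ i))
    (h0 : Measure.map (θ 0) P = G₀)
    (hrec : ∀ n : ℕ,
      ∀ᵐ v ∂(Measure.map (fun ω (i : Fin (n + 1)) => θ i ω) P),
        ProbabilityTheory.condDistrib (θ (n + 1)) (fun ω (i : Fin (n + 1)) => θ i ω) P v
          = (ENNReal.ofReal (α + (n + 1 : ℕ)))⁻¹ •
              (ENNReal.ofReal α • G₀ + ∑ i : Fin (n + 1), Measure.dirac (v i))) :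
    ∀ (n : ℕ) (σ : Equiv.Perm (Fin n)),
      Measure.map (fun ω (i : Fin n) => θ (σ i) ω) P
        = Measure.map (fun ω (i : Fin n) => θ i ω) P := by
  have hV : ∀ k : ℕ, Measurable (fun ω (i : Fin k) => θ i ω) :=
    fun k => measurable_pi_lambda _ fun i => hmeas i
  have hprob : ∀ k, IsProbabilityMeasure (Measure.map (fun ω (i : Fin k) => θ i ω) P) :=
    fun k => Measure.isProbabilityMeasure_map (hV k).aemeasurable
  have hstep : ∀ k, Measure.map (fun ω (i : Fin (k + 1)) => θ i ω) P
      = ((Measure.map (fun ω (i : Fin k) => θ i ω) P) ⊗ₘ urnK G₀ α k).map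
          (fun p : (Fin k → Θ) × Θ => (Fin.snoc p.1 p.2 : Fin (k + 1) → Θ)) := by
    intro k
    cases k with
    | zero =>
      haveI := hprob 0
      have hK0 : urnK G₀ α 0 = ProbabilityTheory.Kernel.const (Fin 0 → Θ) G₀ := by
        ext v : 1
        rw [urnK_apply, ProbabilityTheory.Kernel.const_apply]
        have h1 : urnM G₀ α v = ENNReal.ofReal α • G₀ := by
          simp [urnM]
        have h2 : (α + ((0 : ℕ) : ℝ)) = α := by simp
        rw [h1, h2, smul_smul, ENNReal.inv_mul_cancel
          (ENNReal.ofReal_pos.2 hα).ne' ENNReal.ofReal_ne_top, one_smul]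
      have hone : Measurable (fun x : Θ => fun _ : Fin 1 => x) :=
        measurable_pi_lambda _ fun _ => measurable_id
      have h1 : (fun p : (Fin 0 → Θ) × Θ => (Fin.snoc p.1 p.2 : Fin 1 → Θ))
          = (fun x : Θ => fun _ : Fin 1 => x) ∘ Prod.snd := by
        funext p; funext i
        refine Fin.lastCases ?_ (fun j => j.elim0) i
        simp [Fin.snoc]
      rw [hK0, Measure.compProd_const, h1,
        ← Measure.map_map hone measurable_snd, Measure.map_snd_prod]
      simp only [measure_univ, one_smul]
      rw [← h0, Measure.map_map hone (hmeas 0)]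
      congr 1
      funext ω; funext i
      have : (i : ℕ) = 0 := Fin.val_eq_zero i
      simp [this]
    | succ n =>
      haveI := hprob (n + 1)
      haveI := urnK_isMarkov G₀ hα (n + 1)
      set ρ : Measure ((Fin (n + 1) → Θ) × Θ) :=
        P.map (fun ω => (fun i : Fin (n + 1) => θ i ω, θ (n + 1) ω)) with hρ
      haveI : IsProbabilityMeasure ρ :=
        Measure.isProbabilityMeasure_map ((hV (n + 1)).prodMk (hmeas (n + 1))).aemeasurable
      have hcd : ProbabilityTheory.condDistrib (θ (n + 1))
          (fun ω (i : Fin (n + 1)) => θ i ω) P = ρ.condKernel := by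
        rw [ProbabilityTheory.condDistrib]
      have hfst : ρ.fst = P.map (fun ω (i : Fin (n + 1)) => θ i ω) :=
        Measure.fst_map_prodMk (hmeas (n + 1))
      have hae : (ProbabilityTheory.condDistrib (θ (n + 1))
            (fun ω (i : Fin (n + 1)) => θ i ω) P)
          =ᵐ[P.map (fun ω (i : Fin (n + 1)) => θ i ω)] (urnK G₀ α (n + 1)) := by
        filter_upwards [hrec n] with v hv
        rw [hv, urnK_apply]
        rfl
      have hcp : (P.map (fun ω (i : Fin (n + 1)) => θ i ω)) ⊗ₘ urnK G₀ α (n + 1) = ρ := by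
        rw [← Measure.compProd_congr hae, hcd, ← hfst]
        exact ρ.disintegrate ρ.condKernel
      rw [hcp, hρ, Measure.map_map measurable_snocF ((hV (n + 1)).prodMk (hmeas (n + 1)))]
      congr 1
      funext ω; funext i
      refine Fin.lastCases ?_ (fun j => ?_) i
      · simp [Fin.snoc_last, Fin.val_last]
      · simp [Fin.snoc_castSucc, Fin.coe_castSucc]
  have main := urn_exchangeable_abstract G₀ hα
    (fun k => Measure.map (fun ω (i : Fin k) => θ i ω) P) hprob hstep
  intro n σ
  have h := main n σ
  rw [Measure.map_map (measurable_pc σ) (hV n)] at h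
  exact h
end
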